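/- arXiv:1405.6594 — 3 statements merged into one kernel-verified Lean document; each statement's English description precedes it below -/
import Mathlib

section
/- [Proposition 1(a), sign-preserving noisy adder] Let Q̃ ≥ 1 be an integer and p ∈ [0,1]. Let c : ℤ → ℝ satisfy c(z) ≥ 0 for all z, c(z) = 0 for |z| > Q̃, and Σ_{z=−Q̃}^{Q̃} c(z) = 1. Set c⁻ = Σ_{z=−Q̃}^{−1} c(z) + c(0)/2 and c⁺ = c(0)/2 + Σ_{z=1}^{Q̃} c(z). Define C : {−Q̃,…,Q̃} → ℝ by C(z) = (1−p)·c(z) + (p/Q̃)·(c⁻ − c(z)) for z < 0, C(0) = (1−p)·c(0) + (p/Q̃)·(1 − c(0)), and C(z) = (1−p)·c(z) + (p/Q̃)·(c⁺ − c(z)) for z > 0. Then the error probability P_e = Σ_{z=−Q̃}^{−1} C(z) + C(0)/2 satisfies P_e ≥ p/(2Q̃). -/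
/-!
Summing the noisy law over the negative half gives the closed form
`P_e = c⁻ (1 - p/Q̃) + p/(2Q̃)`, where `c⁻ = Σ_{z<0} c(z) + c(0)/2` is the error probability
before the noisy addition. Since `c⁻ ≥ 0` and `p ≤ 1 ≤ Q̃`, the first term is nonnegative.
-/

open Finset

lemma Finset.sum_eq_of_eq_mul_add_mul_sub {ι : Type*} (s : Finset ι) (c C : ι → ℝ)
    (a b M : ℝ) (hC : ∀ z ∈ s, C z = a * c z + b * (M - c z)) :
    ∑ z ∈ s, C z = (a - b) * ∑ z ∈ s, c z + b * (#s * M) := by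
  rw [sum_congr rfl hC, sum_add_distrib, ← mul_sum, ← mul_sum, sum_sub_distrib, sum_const,
    nsmul_eq_mul]
  ring

lemma Int.card_Icc_neg_neg_one_cast (Q : ℤ) (hQ : 0 ≤ Q) :
    ((#(Icc (-Q) (-1)) : ℕ) : ℝ) = Q := by
  rw [Int.card_Icc, show -1 + 1 - -Q = Q by ring]
  exact_mod_cast Int.toNat_of_nonneg hQ

lemma noisyAdder_errorProb_eq (Qt : ℤ) (hQt : 1 ≤ Qt) (p : ℝ) (c C : ℤ → ℝ)
    (hCneg : ∀ z : ℤ, -Qt ≤ z → z < 0 →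
      C z = (1 - p) * c z +
        (p / (Qt : ℝ)) * ((∑ u ∈ Icc (-Qt) (-1), c u + c 0 / 2) - c z))
    (hC0 : C 0 = (1 - p) * c 0 + (p / (Qt : ℝ)) * (1 - c 0)) :
    ∑ z ∈ Icc (-Qt) (-1), C z + C 0 / 2
      = (∑ u ∈ Icc (-Qt) (-1), c u + c 0 / 2) * (1 - p / Qt) + p / (2 * Qt) := by
  have hQ : (Qt : ℝ) ≠ 0 := by exact_mod_cast (by omega : Qt ≠ 0)
  rw [sum_eq_of_eq_mul_add_mul_sub _ c C _ _ _ fun z hz => hCneg z (mem_Icc.1 hz).1 (by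
      linarith [(mem_Icc.1 hz).2]), Int.card_Icc_neg_neg_one_cast Qt (by omega), hC0]
  field_simp
  ring

theorem stmt1_general (Qt : ℤ) (hQt : 1 ≤ Qt) (p : ℝ) (hp1 : p ≤ 1)
    (c : ℤ → ℝ) (hc_nonneg : ∀ z, 0 ≤ c z)
    (C : ℤ → ℝ)
    (hCneg : ∀ z : ℤ, -Qt ≤ z → z < 0 →
      C z = (1 - p) * c z +
        (p / (Qt : ℝ)) * ((∑ u ∈ Finset.Icc (-Qt) (-1), c u + c 0 / 2) - c z))
    (hC0 : C 0 = (1 - p) * c 0 + (p / (Qt : ℝ)) * (1 - c 0)) :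
    ∑ z ∈ Finset.Icc (-Qt) (-1), C z + C 0 / 2 ≥ p / (2 * (Qt : ℝ)) := by
  have hQ : (1 : ℝ) ≤ Qt := by exact_mod_cast hQt
  have hc_minus : 0 ≤ ∑ u ∈ Icc (-Qt) (-1), c u + c 0 / 2 := by
    linarith [hc_nonneg 0, sum_nonneg fun u (_ : u ∈ Icc (-Qt) (-1)) => hc_nonneg u]
  have hpQ : p / Qt ≤ 1 := (div_le_one (by linarith)).2 (by linarith)
  rw [noisyAdder_errorProb_eq Qt hQt p c C hCneg hC0, ge_iff_le]
  exact le_add_of_nonneg_left (mul_nonneg hc_minus (by linarith))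

/-- Proposition 1(a): lower bound on the error probability for the
sign-preserving bitwise-XORed noisy adder. -/
theorem stmt1 (Qt : ℤ) (hQt : 1 ≤ Qt) (p : ℝ) (hp0 : 0 ≤ p) (hp1 : p ≤ 1)
    (c : ℤ → ℝ) (hc_nonneg : ∀ z, 0 ≤ c z)
    (hc_supp : ∀ z : ℤ, Qt < |z| → c z = 0)
    (hc_sum : ∑ z ∈ Finset.Icc (-Qt) Qt, c z = 1)
    (C : ℤ → ℝ)
    (hCneg : ∀ z : ℤ, -Qt ≤ z → z < 0 →
      C z = (1 - p) * c z +
        (p / (Qt : ℝ)) * ((∑ u ∈ Finset.Icc (-Qt) (-1), c u + c 0 / 2) - c z))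
    (hC0 : C 0 = (1 - p) * c 0 + (p / (Qt : ℝ)) * (1 - c 0))
    (hCpos : ∀ z : ℤ, 0 < z → z ≤ Qt →
      C z = (1 - p) * c z +
        (p / (Qt : ℝ)) * ((c 0 / 2 + ∑ u ∈ Finset.Icc 1 Qt, c u) - c z)) :
    ∑ z ∈ Finset.Icc (-Qt) (-1), C z + C 0 / 2 ≥ p / (2 * (Qt : ℝ)) :=
  stmt1_general Qt hQt p hp1 c hc_nonneg C hCneg hC0
end

section
/- [Proposition 1(b), full-depth noisy adder] Let Q̃ ≥ 1 be an integer and p ∈ [0,1] with p·(2Q̃ + 1) ≤ 2Q̃. Let c : ℤ → ℝ satisfy c(z) ≥ 0 for all z, c(z) = 0 for |z| > Q̃, and Σ_{z=−Q̃}^{Q̃} c(z) = 1. Set c⁻ = Σ_{z=−Q̃}^{−1} c(z) + c(0)/2. Define C : {−Q̃,…,Q̃} → ℝ by C(z) = (1−p)·c(z) + (p/(2Q̃))·(1 − c(z)) for every z ∈ {−Q̃,…,Q̃}. Then the error probability P_e = Σ_{z=−Q̃}^{−1} C(z) + C(0)/2 satisfies both P_e = p/2 + (1−p)·c⁻ +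 (p/(4Q̃))·(1 − 2c⁻) and P_e ≥ p/2 + p/(4Q̃). -/
/-! The noisy error probability is an affine function of `c⁻`,
`P_e = p/2 + p/(4Q̃) + (1 - p - p/(2Q̃)) c⁻`, whose slope is nonnegative exactly when
`p (2Q̃ + 1) ≤ 2Q̃`; the bound is its value at `c⁻ = 0`. -/

open Finset

/-- Applied to `C` this is the error probability `P_e`, applied to `c` it is `c⁻`. -/
noncomputable def errorProb (Q : ℤ) (f : ℤ → ℝ) : ℝ :=
  ∑ z ∈ Icc (-Q) (-1), f z + f 0 / 2

lemma errorProb_congr {Q : ℤ} (hQ : 0 ≤ Q) {f g : ℤ → ℝ}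
    (hfg : ∀ z, -Q ≤ z → z ≤ Q → f z = g z) : errorProb Q f = errorProb Q g := by
  unfold errorProb
  rw [sum_congr rfl fun z hz => hfg z (mem_Icc.1 hz).1 (by linarith [(mem_Icc.1 hz).2]),
    hfg 0 (by omega) hQ]

lemma card_Icc_neg_neg_one {Q : ℤ} (hQ : 0 ≤ Q) : ((Icc (-Q) (-1)).card : ℝ) = Q := by
  rw [Int.card_Icc, show (-1 : ℤ) + 1 - -Q = Q by ring]
  exact_mod_cast Int.toNat_of_nonneg hQ

lemma sum_mul_add_mul_one_sub {ι : Type*} (s : Finset ι) (c : ι → ℝ) (a b : ℝ) :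
    ∑ z ∈ s, (a * c z + b * (1 - c z)) = a * ∑ z ∈ s, c z + b * (#s - ∑ z ∈ s, c z) := by
  simp only [sum_add_distrib, ← mul_sum, sum_sub_distrib, sum_const, nsmul_eq_mul, mul_one]

lemma errorProb_mul_add_mul_one_sub {Q : ℤ} (hQ : 0 ≤ Q) (c : ℤ → ℝ) (a b : ℝ) :
    errorProb Q (fun z => a * c z + b * (1 - c z))
      = a * errorProb Q c + b * (Q + 1 / 2 - errorProb Q c) := by
  unfold errorProb
  rw [sum_mul_add_mul_one_sub, card_Icc_neg_neg_one hQ]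
  ring

lemma errorProb_of_noisy {Q : ℤ} (hQ : 0 < Q) (p : ℝ) {c C : ℤ → ℝ}
    (hC : ∀ z, -Q ≤ z → z ≤ Q → C z = (1 - p) * c z + p / (2 * Q) * (1 - c z)) :
    errorProb Q C = p / 2 + p / (4 * Q) + (1 - p - p / (2 * Q)) * errorProb Q c := by
  have hQ' : (0 : ℝ) < Q := by exact_mod_cast hQ
  rw [errorProb_congr hQ.le hC, errorProb_mul_add_mul_one_sub hQ.le]
  field_simp
  ring

lemma one_sub_sub_div_nonneg {Q p : ℝ} (hQ : 0 < Q) (hpQ : p * (2 * Q + 1) ≤ 2 * Q) :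
    0 ≤ 1 - p - p / (2 * Q) := by
  have : p / (2 * Q) ≤ 1 - p := by
    rw [div_le_iff₀ (by positivity)]
    linarith
  linarith

theorem stmt2_general (Qt : ℤ) (hQt : 1 ≤ Qt) (p : ℝ)
    (hpQ : p * (2 * (Qt : ℝ) + 1) ≤ 2 * (Qt : ℝ))
    (c : ℤ → ℝ) (hc_nonneg : ∀ z, 0 ≤ c z)
    (C : ℤ → ℝ)
    (hC : ∀ z : ℤ, -Qt ≤ z → z ≤ Qt →
      C z = (1 - p) * c z + (p / (2 * (Qt : ℝ))) * (1 - c z)) :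
    (∑ z ∈ Finset.Icc (-Qt) (-1), C z + C 0 / 2
        = p / 2 + (1 - p) * (∑ u ∈ Finset.Icc (-Qt) (-1), c u + c 0 / 2) +
          (p / (4 * (Qt : ℝ))) *
            (1 - 2 * (∑ u ∈ Finset.Icc (-Qt) (-1), c u + c 0 / 2))) ∧
    ∑ z ∈ Finset.Icc (-Qt) (-1), C z + C 0 / 2 ≥ p / 2 + p / (4 * (Qt : ℝ)) := by
  have hQ : (0 : ℝ) < Qt := by exact_mod_cast hQt
  have hPe := errorProb_of_noisy (by omega) p hC
  have hcm : 0 ≤ errorProb Qt c :=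
    add_nonneg (sum_nonneg fun z _ => hc_nonneg z) (div_nonneg (hc_nonneg 0) zero_le_two)
  change errorProb Qt C = p / 2 + (1 - p) * errorProb Qt c + p / (4 * Qt) * (1 - 2 * errorProb Qt c)
    ∧ errorProb Qt C ≥ p / 2 + p / (4 * Qt)
  refine ⟨?_, ?_⟩
  · rw [hPe]
    field_simp
    ring
  · rw [hPe]
    linarith [mul_nonneg (one_sub_sub_div_nonneg hQ hpQ) hcm]

/-- Proposition 1(b): exact expression and lower bound on the error probability
for the full-depth bitwise-XORed noisy adder. -/
theorem stmt2 (Qt : ℤ) (hQt : 1 ≤ Qt) (p : ℝ) (hp0 : 0 ≤ p) (hp1 : p ≤ 1)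
    (hpQ : p * (2 * (Qt : ℝ) + 1) ≤ 2 * (Qt : ℝ))
    (c : ℤ → ℝ) (hc_nonneg : ∀ z, 0 ≤ c z)
    (hc_supp : ∀ z : ℤ, Qt < |z| → c z = 0)
    (hc_sum : ∑ z ∈ Finset.Icc (-Qt) Qt, c z = 1)
    (C : ℤ → ℝ)
    (hC : ∀ z : ℤ, -Qt ≤ z → z ≤ Qt →
      C z = (1 - p) * c z + (p / (2 * (Qt : ℝ))) * (1 - c z)) :
    (∑ z ∈ Finset.Icc (-Qt) (-1), C z + C 0 / 2
        = p / 2 + (1 - p) * (∑ u ∈ Finset.Icc (-Qt) (-1), c u + c 0 / 2) +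
          (p / (4 * (Qt : ℝ))) *
            (1 - 2 * (∑ u ∈ Finset.Icc (-Qt) (-1), c u + c 0 / 2))) ∧
    ∑ z ∈ Finset.Icc (-Qt) (-1), C z + C 0 / 2 ≥ p / 2 + p / (4 * (Qt : ℝ)) :=
  stmt2_general Qt hQt p hpQ c hc_nonneg C hC
end

section
/- [Necessary condition for a target error probability, full-depth adder] Let Q̃ ≥ 1 be an integer, η ≥ 0, and p ∈ [0,1] with p·(2Q̃ + 1) ≤ 2Q̃. Let c : ℤ → ℝ satisfy c(z) ≥ 0 for all z, c(z) = 0 for |z| > Q̃, and Σ_{z=−Q̃}^{Q̃} c(z) = 1. Define C : {−Q̃,…,Q̃} → ℝ by C(z) = (1−p)·c(z) + (p/(2Q̃))·(1 − c(z)) for every z. If Σ_{z=−Q̃}^{−1} C(z) + C(0)/2 ≤ η, then p ≤ 4·Q̃·η/(2Q̃ + 1). -/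
/-! Writing `a = p / (2Q̃)`, each noisy mass is `C z = a + (1 - p - a) c z`, and
`1 - p - a ≥ 0` is exactly `p (2Q̃ + 1) ≤ 2Q̃`. Dropping the nonnegative `c`-part,
the `Q̃` negative values and half of `C 0` already carry mass
`a (Q̃ + 1/2) = p (2Q̃ + 1) / (4Q̃)`. -/

lemma sum_noisy_eq {ι : Type*} (s : Finset ι) (c : ι → ℝ) (p a : ℝ) :
    ∑ z ∈ s, ((1 - p) * c z + a * (1 - c z)) = a * s.card + (1 - p - a) * ∑ z ∈ s, c z := by
  simp only [show ∀ z, (1 - p) * c z + a * (1 - c z) = a + (1 - p - a) * c z from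
    fun z => by ring, Finset.sum_add_distrib, Finset.sum_const, nsmul_eq_mul, Finset.mul_sum]
  ring

lemma mul_card_add_half_le_sum_add_half {ι : Type*} [DecidableEq ι] (s : Finset ι) (z₀ : ι)
    (c C : ι → ℝ) (p a : ℝ) (hc : ∀ z, 0 ≤ c z) (hpa : p + a ≤ 1)
    (hC : ∀ z ∈ insert z₀ s, C z = (1 - p) * c z + a * (1 - c z)) :
    a * (s.card + 1 / 2) ≤ ∑ z ∈ s, C z + C z₀ / 2 := by
  have hsum : ∑ z ∈ s, C z = a * s.card + (1 - p - a) * ∑ z ∈ s, c z := by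
    rw [← sum_noisy_eq]
    exact Finset.sum_congr rfl fun z hz => hC z (Finset.mem_insert_of_mem hz)
  have hmass : 0 ≤ (1 - p - a) * (∑ z ∈ s, c z + c z₀ / 2) :=
    mul_nonneg (by linarith)
      (add_nonneg (Finset.sum_nonneg fun z _ => hc z) (by linarith [hc z₀]))
  rw [hsum, hC z₀ (Finset.mem_insert_self z₀ s)]
  linarith

theorem stmt13_general (Qt : ℤ) (hQt : 1 ≤ Qt) (η : ℝ)
    (p : ℝ)
    (hpQ : p * (2 * (Qt : ℝ) + 1) ≤ 2 * (Qt : ℝ))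
    (c : ℤ → ℝ) (hc_nonneg : ∀ z, 0 ≤ c z)
    (C : ℤ → ℝ)
    (hC : ∀ z : ℤ, -Qt ≤ z → z ≤ Qt →
      C z = (1 - p) * c z + (p / (2 * (Qt : ℝ))) * (1 - c z))
    (htarget : ∑ z ∈ Finset.Icc (-Qt) (-1), C z + C 0 / 2 ≤ η) :
    p ≤ 4 * (Qt : ℝ) * η / (2 * (Qt : ℝ) + 1) := by
  have hQ : (0 : ℝ) < Qt := by exact_mod_cast hQt
  have hcard : ((Finset.Icc (-Qt) (-1)).card : ℝ) = Qt := by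
    rw [Int.card_Icc, show -1 + 1 - -Qt = Qt by ring, ← Int.cast_natCast,
      Int.toNat_of_nonneg (by omega)]
  have hpa : p + p / (2 * Qt) ≤ 1 := by
    rw [← sub_nonneg, show 1 - (p + p / (2 * Qt)) = (2 * Qt - p * (2 * Qt + 1)) / (2 * Qt) by
      field_simp]
    exact div_nonneg (by linarith) (by positivity)
  have hbound := mul_card_add_half_le_sum_add_half (Finset.Icc (-Qt) (-1)) 0 c C p
    (p / (2 * Qt)) hc_nonneg hpa fun z hz => by
      simp only [Finset.mem_insert, Finset.mem_Icc] at hz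
      exact hC z (by omega) (by omega)
  rw [hcard] at hbound
  rw [le_div_iff₀ (by positivity)]
  calc p * (2 * Qt + 1) = 4 * Qt * (p / (2 * Qt) * (Qt + 1 / 2)) := by field_simp; ring
    _ ≤ 4 * Qt * η := by gcongr; linarith

/-- Necessary condition `p ≤ 4·Q̃·η/(2Q̃+1)` to achieve a target error
probability `η` with a full-depth bitwise-XORed noisy adder. -/
theorem stmt13 (Qt : ℤ) (hQt : 1 ≤ Qt) (η : ℝ) (hη : 0 ≤ η)
    (p : ℝ) (hp0 : 0 ≤ p) (hp1 : p ≤ 1)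
    (hpQ : p * (2 * (Qt : ℝ) + 1) ≤ 2 * (Qt : ℝ))
    (c : ℤ → ℝ) (hc_nonneg : ∀ z, 0 ≤ c z)
    (hc_supp : ∀ z : ℤ, Qt < |z| → c z = 0)
    (hc_sum : ∑ z ∈ Finset.Icc (-Qt) Qt, c z = 1)
    (C : ℤ → ℝ)
    (hC : ∀ z : ℤ, -Qt ≤ z → z ≤ Qt →
      C z = (1 - p) * c z + (p / (2 * (Qt : ℝ))) * (1 - c z))
    (htarget : ∑ z ∈ Finset.Icc (-Qt) (-1), C z + C 0 / 2 ≤ η) :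
    p ≤ 4 * (Qt : ℝ) * η / (2 * (Qt : ℝ) + 1) :=
  stmt13_general Qt hQt η p hpQ c hc_nonneg C hC htarget
end
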